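/- The edge weights used in the Dijkstra update are non-negative: for a reasonable strategy σ and every edge (u,v) in A_⊥ restricted to I_σ, the weight w(u,v) := (℘(u) + V_σ(v)) − V_σ(u) satisfies w(u,v) ≽ ō; moreover, for any path t_0 t_1 … t_n ⊥ in this restricted graph, ℘(t_0 … t_n) − V_σ(t_0) = w(t_0,t_1) + w(t_1,t_2) + … + w(t_n,⊥). -/

import Mathlib

open scoped Classical

/-- The order `≺` on integer color profiles `ℤ^d`: compare at the largest index where
they differ; at an even index the larger entry wins, at an odd index the smaller one. -/
def FinLt {d : ℕ} (p q : Fin d → ℤ) : Prop :=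
  ∃ k : Fin d, p k ≠ q k ∧ (∀ j, k < j → p j = q j) ∧
    ((Even (k : ℕ) ∧ p k < q k) ∨ (Odd (k : ℕ) ∧ q k < p k))

/-- Reflexive closure `≼` of `FinLt`. -/
def FinLe {d : ℕ} (p q : Fin d → ℤ) : Prop := p = q ∨ FinLt p q

/-- Color profiles: `ℤ^d` together with `-∞` (`bot`) and `∞` (`top`). -/
inductive Prof (d : ℕ) where
  | bot : Prof d
  | fin : (Fin d → ℤ) → Prof d
  | top : Prof d

/-- The order `≺` on color profiles: `-∞` is the bottom element, `∞` the top element,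
finite profiles are compared by `FinLt`. -/
def Prof.Lt {d : ℕ} : Prof d → Prof d → Prop
  | .bot, .bot => False
  | .bot, .fin _ => True
  | .bot, .top => True
  | .fin _, .bot => False
  | .fin p, .fin q => FinLt p q
  | .fin _, .top => True
  | .top, _ => False

/-- Reflexive closure `≼` of `Prof.Lt`. -/
def Prof.Le {d : ℕ} (p q : Prof d) : Prop := p = q ∨ Prof.Lt p q

/-- Adding a vector in `ℤ^d` to a profile; `±∞` are absorbing. -/
def Prof.add {d : ℕ} : Prof d → (Fin d → ℤ) → Prof d
  | .bot, _ => .bot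
  | .fin p, q => .fin (p + q)
  | .top, _ => .top

/-- A parity game arena: a finite directed graph, each node owned by player 0 or 1 and
colored by a color in `{0,…,d-1}`; every node has at least one successor. -/
structure PGA (V : Type) (d : ℕ) where
  edge : V → V → Prop
  owner : V → Fin 2
  color : V → Fin d
  succ : ∀ v, ∃ w, edge v w

variable {V : Type} {d : ℕ}

/-- The profile `℘(s)` of a single vertex: the unit vector at its color. -/
def unitProf (A : PGA V d) (s : V) : Fin d → ℤ := fun k => if A.color s = k then 1 else 0

/-- The color profile `℘(π)` of a finite sequence of vertices: how often each color occurs. -/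
def listProf (A : PGA V d) (L : List V) : Fin d → ℤ := fun k => ((L.map A.color).count k : ℤ)

/-- `℘(s) + p` for a vertex `s` and a profile `p`. -/
def addV (A : PGA V d) (s : V) (p : Prof d) : Prof d := p.add (unitProf A s)

/-- Edges of the escape arena `A_⊥` over `Option V`, where `none` is the sink `⊥`:
all edges of `A`, plus an edge from every player-0 node to `⊥`; `⊥` has no outgoing edges. -/
def EdgeB (A : PGA V d) : Option V → Option V → Prop
  | some u, some v => A.edge u v
  | some u, none => A.owner u = 0
  | none, _ => False

/-- A (memoryless, possibly non-deterministic) strategy of player 0 in `A_⊥`: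
a set of player-0 edges giving every player-0 node at least one successor. -/
def Strategy0 (A : PGA V d) (σ : V → Option V → Prop) : Prop :=
  (∀ s t, σ s t → A.owner s = 0 ∧ EdgeB A (some s) t) ∧
  (∀ s, A.owner s = 0 → ∃ t, σ s t)

/-- A (memoryless, possibly non-deterministic) strategy of player 1 (who never moves to `⊥`). -/
def Strategy1 (A : PGA V d) (τ : V → V → Prop) : Prop :=
  (∀ s t, τ s t → A.owner s = 1 ∧ A.edge s t) ∧
  (∀ s, A.owner s = 1 → ∃ t, τ s t)

/-- A strategy is deterministic if it picks at most one successor per node. -/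
def Deterministic (σ : V → Option V → Prop) : Prop :=
  ∀ s t t', σ s t → σ s t' → t = t'

/-- Edges of `A_⊥` restricted to a player-0 strategy `σ` that stay inside `V`
(cycles of `A_⊥|σ` never pass through `⊥`). -/
def EdgeSig (A : PGA V d) (σ : V → Option V → Prop) (u v : V) : Prop :=
  (A.owner u = 1 ∧ A.edge u v) ∨ σ u (some v)

/-- A (nonempty) cycle in `A_⊥|σ`: consecutive edges plus the wrap-around edge. -/
def CycleIn (A : PGA V d) (σ : V → Option V → Prop) (L : List V) : Prop :=
  L ≠ [] ∧ List.Chain' (EdgeSig A σ) L ∧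
  ∀ a b, L.head? = some a → L.getLast? = some b → EdgeSig A σ b a

/-- A player-0 strategy is reasonable if `A_⊥|σ` has no 1-dominated cycle,
i.e. on every cycle the dominating (maximal) color is even. -/
def Reasonable (A : PGA V d) (σ : V → Option V → Prop) : Prop :=
  ∀ L, CycleIn A σ L → ∀ v ∈ L, (∀ w ∈ L, A.color w ≤ A.color v) → Even ((A.color v : ℕ))

/-- One step of a play in `A_⊥` with player 0 using `σ` and player 1 using `τ`;
the sink `⊥` is absorbing. -/
def PlayStep (A : PGA V d) (σ : V → Option V → Prop) (τ : V → V → Prop) :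
    Option V → Option V → Prop
  | none, y => y = none
  | some u, y => (A.owner u = 0 ∧ σ u y) ∨ (A.owner u = 1 ∧ ∃ v, y = some v ∧ τ u v)

/-- A play from `s` in `A_⊥|σ,τ` (modelled with absorbing sink). -/
def IsPlay (A : PGA V d) (σ : V → Option V → Prop) (τ : V → V → Prop)
    (s : V) (π : ℕ → Option V) : Prop :=
  π 0 = some s ∧ ∀ n, PlayStep A σ τ (π n) (π (n + 1))

/-- One step of a play in `A_⊥` with player 0 using `σ`, player 1 unconstrained. -/
def PlayStepB (A : PGA V d) (σ : V → Option V → Prop) : Option V → Option V → Prop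
  | none, y => y = none
  | some u, y => (A.owner u = 0 ∧ σ u y) ∨ (A.owner u = 1 ∧ ∃ v, y = some v ∧ A.edge u v)

/-- A play from `s` in `A_⊥|σ` against an arbitrary player 1. -/
def IsPlayB (A : PGA V d) (σ : V → Option V → Prop) (s : V) (π : ℕ → Option V) : Prop :=
  π 0 = some s ∧ ∀ n, PlayStepB A σ (π n) (π (n + 1))

/-- Color `k` occurs at position `n` of the play `π`. -/
def ColorAt (A : PGA V d) (π : ℕ → Option V) (n : ℕ) (k : Fin d) : Prop :=
  ∃ v, π n = some v ∧ A.color v = k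

/-- An infinite play of `A_⊥` (never reaching `⊥`) is won by player 0 iff the maximal color
occurring infinitely often is even. -/
def Won0B (A : PGA V d) (π : ℕ → Option V) : Prop :=
  ∃ k : Fin d, Even ((k : ℕ)) ∧ (∀ N, ∃ n ≥ N, ColorAt A π n k) ∧
    ∀ j : Fin d, k < j → ∃ N, ∀ n ≥ N, ¬ ColorAt A π n j

/-- The value `℘(π)` of a play in `A_⊥`: for a finite play (reaching `⊥`), the color profile
of its vertices; for an infinite play, `∞` if player 0 wins it and `-∞` otherwise. -/
noncomputable def PlayValue (A : PGA V d) (π : ℕ → Option V) : Prof d :=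
  if h : ∃ n, π n = none then
    .fin (fun k =>
      (((Finset.range (Nat.find h)).filter (fun n => ColorAt A π n k)).card : ℤ))
  else if Won0B A π then .top else .bot

/-- `p` is the `≺`-maximum of the set `S` of profiles. -/
def IsMaxOf {d : ℕ} (S : Set (Prof d)) (p : Prof d) : Prop := p ∈ S ∧ ∀ q ∈ S, Prof.Le q p

/-- `p` is the `≺`-minimum of the set `S` of profiles. -/
def IsMinOf {d : ℕ} (S : Set (Prof d)) (p : Prof d) : Prop := p ∈ S ∧ ∀ q ∈ S, Prof.Le p q

/-- `W` is the valuation `𝒱_σ` of the player-0 strategy `σ`: `W(⊥) = ō`, and `W(s)` is the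
`≺`-minimal value player 1 can guarantee (by a memoryless strategy) in any play from `s`
in `A_⊥|σ`. -/
def IsValuation (A : PGA V d) (σ : V → Option V → Prop) (W : Option V → Prof d) : Prop :=
  W none = .fin 0 ∧
  ∀ s : V, IsMinOf
    { p | ∃ τ, Strategy1 A τ ∧
        IsMaxOf { q | ∃ π, IsPlay A σ τ s π ∧ q = PlayValue A π } p }
    (W (some s))

/-- `(s,t)` is an improvement of `σ` w.r.t. the valuation `W`: a player-0 edge with
`W(s) ≼ ℘(s) + W(t)`.  `I_σ` is the set (strategy) of all improvements. -/
def Improvement (A : PGA V d) (W : Option V → Prof d) (s : V) (t : Option V) : Prop :=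
  A.owner s = 0 ∧ EdgeB A (some s) t ∧ Prof.Le (W (some s)) (addV A s (W t))

/-- `(s,t)` is a strict improvement of `σ` w.r.t. `W`: a player-0 edge with
`W(s) ≺ ℘(s) + W(t)`. -/
def StrictImp (A : PGA V d) (W : Option V → Prof d) (s : V) (t : Option V) : Prop :=
  A.owner s = 0 ∧ EdgeB A (some s) t ∧ Prof.Lt (W (some s)) (addV A s (W t))

/-- A memoryless strategy of player 0 in the original parity game arena `A`. -/
def Strat0A (A : PGA V d) (σ : V → V → Prop) : Prop :=
  (∀ s t, σ s t → A.owner s = 0 ∧ A.edge s t) ∧ (∀ s, A.owner s = 0 → ∃ t, σ s t)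

/-- A play in `A` from `s` where player 0 follows `σ` and player 1 is unconstrained. -/
def PlayA (A : PGA V d) (σ : V → V → Prop) (s : V) (π : ℕ → V) : Prop :=
  π 0 = s ∧ ∀ n, (A.owner (π n) = 0 → σ (π n) (π (n + 1))) ∧
    (A.owner (π n) = 1 → A.edge (π n) (π (n + 1)))

/-- Parity winning condition in `A` for player 0: the maximal color seen infinitely often is even. -/
def Won0A (A : PGA V d) (π : ℕ → V) : Prop :=
  ∃ k : Fin d, Even ((k : ℕ)) ∧ (∀ N, ∃ n ≥ N, A.color (π n) = k) ∧
    ∀ j : Fin d, k < j → ∃ N, ∀ n ≥ N, A.color (π n) ≠ j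

/-- Player 0 wins the node `s` of the parity game arena `A` (with a memoryless strategy). -/
def Win0 (A : PGA V d) (s : V) : Prop :=
  ∃ σ, Strat0A A σ ∧ ∀ π, PlayA A σ s π → Won0A A π

/-- An acyclic path of `A_⊥` terminating in `⊥`: pairwise distinct vertices, consecutive
edges of `A`, and the last vertex owned by player 0 (so it has the edge to `⊥`). -/
def AcyclicToBot (A : PGA V d) (L : List V) : Prop :=
  L.Nodup ∧ List.Chain' A.edge L ∧ ∀ b, L.getLast? = some b → A.owner b = 0

/-- Edges of `A_⊥` restricted to the all-improvements strategy `I_σ`. -/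
def EdgeRestrI {V : Type} {d : ℕ} (A : PGA V d) (W : Option V → Prof d) :
    Option V → Option V → Prop
  | none, _ => False
  | some u, y => (A.owner u = 1 ∧ ∃ v, y = some v ∧ A.edge u v) ∨ Improvement A W u y

/-!
Improvement edges have non-negative weight by definition, and the path identity is a telescoping
sum, so the content is a player-1 edge `u → v`. Fix a counter-strategy `τ` of player 1 that is
optimal from `v`. If `u` is not reachable from `v` under `τ`, redirecting `τ` at `u` to `v` gives
player 1 the value `℘(u) + 𝒱_σ(v)` from `u`. Otherwise the path `v ⇝ u` and the edge `u → v` form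
a cycle of `A_⊥|σ`, whose profile is `≻ ō` because `σ` is reasonable. For the same reason no play
under `τ` from `u` revisits a vertex (repeating the loop forever would give player 0 the value `∞`
from `v`), so these plays have a maximal value `m`, and `𝒱_σ(u) ≼ m`. Prefixing `v ⇝ u` to a play
of value `m` gives `m + ℘(v ⇝ u) ≼ 𝒱_σ(v)`, with `u` itself not counted in `℘(v ⇝ u)`; hence
`𝒱_σ(u) ≼ m ≺ m + ℘(v ⇝ u) + ℘(u) ≼ 𝒱_σ(v) + ℘(u)`.
-/

open OrderDual

/-- `≺` is the lexicographic order of the signed profile `((-1)^k p k)_k`, read from the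
largest color down. -/
def signedLex : (Fin d → ℤ) →+ Lex ((Fin d)ᵒᵈ → ℤ) where
  toFun p := toLex fun k => (-1) ^ ((ofDual k : Fin d) : ℕ) * p (ofDual k)
  map_zero' := by rw [← toLex_zero]; congr 1; funext k; simp
  map_add' p q := by rw [← toLex_add]; congr 1; funext k; simp [mul_add]

theorem signedLex_injective : Function.Injective (signedLex (d := d)) := by
  intro p q h
  funext k
  have hk := congrFun (congrArg ofLex h) (toDual k)
  simpa [signedLex] using hk

theorem finLt_iff_signedLex_lt {p q : Fin d → ℤ} : FinLt p q ↔ signedLex p < signedLex q := by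
  have hsign : ∀ k : Fin d, (-1 : ℤ) ^ (k : ℕ) * p k < (-1) ^ (k : ℕ) * q k ↔
      (Even (k : ℕ) ∧ p k < q k) ∨ (Odd (k : ℕ) ∧ q k < p k) := by
    intro k
    rcases Nat.even_or_odd (k : ℕ) with hk | hk
    · simp [hk, hk.neg_one_pow, Nat.not_odd_iff_even.mpr hk]
    · simp [hk, hk.neg_one_pow, Nat.not_even_iff_odd.mpr hk]
  change _ ↔ ∃ k, (∀ j, j < k → _ = _) ∧ _ < _
  constructor
  · rintro ⟨k, -, habove, hk⟩
    exact ⟨toDual k, fun j hj => by simp [signedLex, habove (ofDual j) hj], (hsign k).mpr hk⟩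
  · rintro ⟨k, habove, hk⟩
    have hk' := (hsign (ofDual k)).mp hk
    refine ⟨ofDual k, ?_, fun j hj => ?_, hk'⟩
    · rcases hk' with ⟨-, h⟩ | ⟨-, h⟩ <;> omega
    · simpa [signedLex] using habove (toDual j) hj

theorem finLe_iff_signedLex_le {p q : Fin d → ℤ} : FinLe p q ↔ signedLex p ≤ signedLex q := by
  rw [FinLe, finLt_iff_signedLex_lt, le_iff_eq_or_lt, signedLex_injective.eq_iff]
  rfl

theorem finLe_iff_zero_finLe_sub {p q : Fin d → ℤ} : FinLe p q ↔ FinLe 0 (q - p) := by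
  simp only [finLe_iff_signedLex_le, map_sub, map_zero, sub_nonneg]

namespace Prof

theorem fin_le_fin {a b : Fin d → ℤ} : Prof.Le (.fin a) (.fin b) ↔ FinLe a b := by
  simp [Prof.Le, Prof.Lt, FinLe]

theorem not_top_le_fin (b : Fin d → ℤ) : ¬ Prof.Le .top (.fin b) := by
  simp [Prof.Le, Prof.Lt]

theorem add_zero (p : Prof d) : p.add 0 = p := by
  cases p <;> simp [Prof.add]

theorem add_add (p : Prof d) (a b : Fin d → ℤ) : (p.add a).add b = p.add (a + b) := by
  cases p <;> simp [Prof.add, add_assoc]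

theorem Le.add_right {p q : Prof d} (h : p.Le q) (c : Fin d → ℤ) : (p.add c).Le (q.add c) := by
  rcases h with rfl | h
  · exact Or.inl rfl
  cases p <;> cases q <;> simp_all [Prof.Le, Prof.Lt, Prof.add, finLt_iff_signedLex_lt]

end Prof

theorem listProf_nil (A : PGA V d) : listProf A [] = 0 := by
  funext k
  simp [listProf]

theorem listProf_cons (A : PGA V d) (a : V) (l : List V) :
    listProf A (a :: l) = unitProf A a + listProf A l := by
  funext k
  simp [listProf, unitProf, List.count_cons, add_comm]

theorem listProf_append (A : PGA V d) (l l' : List V) :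
    listProf A (l ++ l') = listProf A l + listProf A l' := by
  induction l with
  | nil => simp [listProf_nil]
  | cons a l ih => simp [listProf_cons, ih, add_assoc]

theorem zero_finLt_listProf_of_cycleIn {A : PGA V d} {σ : V → Option V → Prop}
    (hreas : Reasonable A σ) {L : List V} (hL : CycleIn A σ L) : FinLt 0 (listProf A L) := by
  obtain ⟨v, hvL, hmax⟩ :=
    L.toFinset.exists_max_image A.color ((List.toFinset_nonempty_iff L).mpr hL.1)
  simp only [List.mem_toFinset] at hvL hmax
  have hpos : 0 < listProf A L (A.color v) := by
    simpa [listProf] using List.mem_map_of_mem hvL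
  refine ⟨A.color v, hpos.ne, fun j hj => ?_, Or.inl ⟨hreas L hL v hvL hmax, hpos⟩⟩
  have hj' : j ∉ L.map A.color := by
    simp only [List.mem_map, not_exists, not_and]
    exact fun w hw hwj => (hmax w hw).not_gt (hwj ▸ hj)
  simp [listProf, List.count_eq_zero.mpr hj']

section Plays

variable {A : PGA V d} {σ : V → Option V → Prop} {τ τ' : V → V → Prop}
  {s x y : V} {π : ℕ → Option V}

def PlayEdge (A : PGA V d) (σ : V → Option V → Prop) (τ : V → V → Prop) (x y : V) : Prop :=
  PlayStep A σ τ (some x) (some y)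

def playValues (A : PGA V d) (σ : V → Option V → Prop) (τ : V → V → Prop) (s : V) :
    Set (Prof d) :=
  {q | ∃ π, IsPlay A σ τ s π ∧ q = PlayValue A π}

def consPlay (x : V) (π : ℕ → Option V) : ℕ → Option V
  | 0 => some x
  | n + 1 => π n

theorem PlayEdge.edgeSig (hτ : Strategy1 A τ) (h : PlayEdge A σ τ x y) : EdgeSig A σ x y := by
  rcases h with ⟨-, h⟩ | ⟨h1, z, hz, h⟩
  · exact Or.inr h
  · cases hz
    exact Or.inl ⟨h1, (hτ.1 _ _ h).2⟩

theorem playStep_congr (h : ∀ z, τ' x z ↔ τ x z) (y : Option V) :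
    PlayStep A σ τ' (some x) y ↔ PlayStep A σ τ (some x) y := by
  simp only [PlayStep, h]

theorem exists_isPlay (hσ : Strategy0 A σ) (hτ : Strategy1 A τ) (s : V) :
    ∃ π, IsPlay A σ τ s π := by
  have hstep : ∀ x : Option V, ∃ y, PlayStep A σ τ x y := by
    rintro (_ | u)
    · exact ⟨none, rfl⟩
    · obtain h | h : A.owner u = 0 ∨ A.owner u = 1 := by omega
      · obtain ⟨t, ht⟩ := hσ.2 u h
        exact ⟨t, Or.inl ⟨h, ht⟩⟩
      · obtain ⟨t, ht⟩ := hτ.2 u h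
        exact ⟨some t, Or.inr ⟨h, t, rfl, ht⟩⟩
  choose next hnext using hstep
  refine ⟨fun n => next^[n] (some s), rfl, fun n => ?_⟩
  simpa only [Function.iterate_succ_apply'] using hnext (next^[n] (some s))

namespace IsPlay

theorem eq_none_of_le (hπ : IsPlay A σ τ s π) {m n : ℕ} (hm : π m = none) (hmn : m ≤ n) :
    π n = none := by
  induction n, hmn using Nat.le_induction with
  | base => exact hm
  | succ n _ ih => simpa [ih, PlayStep] using hπ.2 n

theorem exists_vertices (hπ : IsPlay A σ τ s π) {j : ℕ} (hj : π j ≠ none) :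
    ∃ g : ℕ → V, ∀ k ≤ j, π k = some (g k) := by
  refine ⟨fun k => (π k).getD s, fun k hk => ?_⟩
  obtain ⟨x, hx⟩ := Option.ne_none_iff_exists'.mp fun h => hj (hπ.eq_none_of_le h hk)
  simp [hx]

theorem reflTransGen (hπ : IsPlay A σ τ s π) :
    ∀ {n : ℕ} {x : V}, π n = some x → Relation.ReflTransGen (PlayEdge A σ τ) s x
  | 0, x, h => by
    obtain rfl : s = x := Option.some_injective _ (hπ.1.symm.trans h)
    exact .refl
  | n + 1, x, h => by
    cases hn : π n with
    | none => simp [hπ.eq_none_of_le hn n.le_succ] at h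
    | some y =>
      have hstep := hπ.2 n
      rw [hn, h] at hstep
      exact (hπ.reflTransGen hn).tail hstep

theorem cons (h : PlayEdge A σ τ x y) (hπ : IsPlay A σ τ y π) :
    IsPlay A σ τ x (consPlay x π) :=
  ⟨rfl, fun
    | 0 => show PlayStep A σ τ (some x) (π 0) by rw [hπ.1]; exact h
    | n + 1 => hπ.2 n⟩

theorem eq_consPlay (hπ : IsPlay A σ τ s π) : π = consPlay s fun n => π (n + 1) := by
  funext n
  cases n
  · exact hπ.1
  · rfl

theorem of_agree (hagree : ∀ x, Relation.ReflTransGen (PlayEdge A σ τ) s x → ∀ z, τ' x z ↔ τ x z)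
    (hπ : IsPlay A σ τ s π) : IsPlay A σ τ' s π := by
  refine ⟨hπ.1, fun n => ?_⟩
  have hstep := hπ.2 n
  cases hn : π n with
  | none => rw [hn] at hstep; exact hstep
  | some x =>
    rw [hn] at hstep
    exact (playStep_congr (hagree x (hπ.reflTransGen hn)) _).mpr hstep

end IsPlay

theorem reflTransGen_of_agree
    (hagree : ∀ x, Relation.ReflTransGen (PlayEdge A σ τ) s x → ∀ z, τ' x z ↔ τ x z)
    (h : Relation.ReflTransGen (PlayEdge A σ τ') s x) :
    Relation.ReflTransGen (PlayEdge A σ τ) s x := by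
  induction h with
  | refl => exact .refl
  | tail _ hstep ih => exact ih.tail ((playStep_congr (hagree _ ih) _).mp hstep)

theorem playValues_eq_of_agree
    (hagree : ∀ x, Relation.ReflTransGen (PlayEdge A σ τ) s x → ∀ z, τ' x z ↔ τ x z) :
    playValues A σ τ' s = playValues A σ τ s := by
  have hiff : ∀ π, IsPlay A σ τ' s π ↔ IsPlay A σ τ s π := fun π =>
    ⟨.of_agree fun x hx z => (hagree x (reflTransGen_of_agree hagree hx) z).symm,
      .of_agree hagree⟩
  simp only [playValues, hiff]

end Plays

section PlayValues

variable {A : PGA V d} {σ : V → Option V → Prop} {τ : V → V → Prop}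
  {u v : V}

theorem won0B_consPlay (x : V) (π : ℕ → Option V) : Won0B A (consPlay x π) ↔ Won0B A π := by
  have hshift : Filter.map (· + 1) Filter.atTop = Filter.atTop := Filter.map_add_atTop_eq_nat 1
  have hfreq : ∀ k, (∀ N, ∃ n ≥ N, ColorAt A (consPlay x π) n k) ↔
      ∀ N, ∃ n ≥ N, ColorAt A π n k := fun k => by
    have key := Filter.frequently_map (m := (· + 1)) (f := Filter.atTop)
      (P := fun n => ColorAt A (consPlay x π) n k)
    rw [hshift] at key
    simp only [Filter.frequently_atTop] at key
    exact key
  have hev : ∀ k, (∃ N, ∀ n ≥ N, ¬ ColorAt A (consPlay x π) n k) ↔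
      ∃ N, ∀ n ≥ N, ¬ ColorAt A π n k := fun k => by
    have key := Filter.eventually_map (m := (· + 1)) (f := Filter.atTop)
      (P := fun n => ¬ ColorAt A (consPlay x π) n k)
    rw [hshift] at key
    simp only [Filter.eventually_atTop] at key
    exact key
  simp only [Won0B, hfreq, hev]

theorem playValue_consPlay (x : V) (π : ℕ → Option V) :
    PlayValue A (consPlay x π) = (PlayValue A π).add (unitProf A x) := by
  by_cases h : ∃ n, π n = none
  · have hc : ∃ n, consPlay x π n = none := ⟨Nat.find h + 1, Nat.find_spec h⟩
    rw [PlayValue, PlayValue, dif_pos hc, dif_pos h, Nat.find_comp_succ hc h (by simp [consPlay])]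
    congr 1
    funext k
    have h0 : ColorAt A (consPlay x π) 0 k ↔ A.color x = k :=
      ⟨fun ⟨_, hv, hc⟩ => Option.some_injective _ hv ▸ hc, fun h => ⟨x, rfl, h⟩⟩
    simp only [Pi.add_apply]
    rw [Finset.card_filter, Finset.card_filter, Finset.sum_range_succ']
    simp only [h0, unitProf]
    push_cast
    rfl
  · have hc : ¬ ∃ n, consPlay x π n = none := by
      rintro ⟨_ | n, hn⟩
      · simp [consPlay] at hn
      · exact h ⟨n, hn⟩
    rw [PlayValue, PlayValue, dif_neg hc, dif_neg h, won0B_consPlay]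
    split_ifs <;> rfl

theorem exists_isPlay_of_isChain :
    ∀ (l : List V) {x : V}, List.IsChain (PlayEdge A σ τ) (x :: l) →
      ∀ {π : ℕ → Option V}, IsPlay A σ τ ((x :: l).getLast (List.cons_ne_nil x l)) π →
        ∃ π', IsPlay A σ τ x π' ∧
          PlayValue A π' = (PlayValue A π).add (listProf A (x :: l).dropLast)
  | [], _, _, π, hπ => ⟨π, hπ, by simp [listProf_nil, Prof.add_zero]⟩
  | y :: l, x, hl, π, hπ => by
    rw [List.isChain_cons_cons] at hl
    obtain ⟨π', hπ', hval⟩ := exists_isPlay_of_isChain l hl.2 hπ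
    refine ⟨consPlay x π', hπ'.cons hl.1, ?_⟩
    rw [playValue_consPlay, hval, Prof.add_add, List.dropLast_cons_cons, listProf_cons, add_comm]

theorem top_mem_playValues_of_reflTransGen (huv : Relation.ReflTransGen (PlayEdge A σ τ) u v)
    (htop : Prof.top ∈ playValues A σ τ v) : Prof.top ∈ playValues A σ τ u := by
  obtain ⟨l, hl, hlast⟩ := List.exists_isChain_cons_of_relationReflTransGen huv
  obtain ⟨π, hπ, hval⟩ := htop
  obtain ⟨π', hπ', hval'⟩ := exists_isPlay_of_isChain l hl (hlast ▸ hπ)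
  exact ⟨π', hπ', by rw [hval', ← hval]; rfl⟩

theorem isMaxOf_playValues_of_forced (hforced : ∀ y, PlayStep A σ τ (some u) y ↔ y = some v)
    {q : Prof d} (hmax : IsMaxOf (playValues A σ τ v) q) :
    IsMaxOf (playValues A σ τ u) (q.add (unitProf A u)) := by
  obtain ⟨⟨πv, hπv, rfl⟩, hle⟩ := hmax
  refine ⟨⟨consPlay u πv, hπv.cons ((hforced _).mpr rfl), (playValue_consPlay u πv).symm⟩, ?_⟩
  rintro _ ⟨π, hπ, rfl⟩
  have hπ1 : π 1 = some v := (hforced _).mp (hπ.1 ▸ hπ.2 0)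
  rw [hπ.eq_consPlay, playValue_consPlay]
  exact (hle _ ⟨_, ⟨hπ1, fun n => hπ.2 (n + 1)⟩, rfl⟩).add_right _

end PlayValues

theorem Nat.add_one_mod_eq_or {m : ℕ} (hm : 0 < m) (n : ℕ) :
    (n + 1) % m = n % m + 1 ∨ (n % m + 1 = m ∧ (n + 1) % m = 0) := by
  rcases Nat.lt_or_ge (n % m + 1) m with h | h
  · exact Or.inl (by rw [← Nat.mod_add_mod, Nat.mod_eq_of_lt h])
  · have hwrap : n % m + 1 = m := le_antisymm (Nat.mod_lt n hm) h
    exact Or.inr ⟨hwrap, by rw [← Nat.mod_add_mod, hwrap, Nat.mod_self]⟩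

section ClosedWalks

variable {A : PGA V d} {σ : V → Option V → Prop} {τ : V → V → Prop}
  {g : ℕ → V} {m : ℕ}

theorem cycleIn_of_closedWalk (hτ : Strategy1 A τ) (hm : 0 < m)
    (hstep : ∀ k < m, PlayEdge A σ τ (g k) (g (k + 1))) (hclosed : g m = g 0) :
    CycleIn A σ ((List.range m).map g) := by
  obtain ⟨m, rfl⟩ := Nat.exists_eq_add_of_lt hm
  rw [zero_add] at hstep hclosed ⊢
  refine ⟨by simp, ?_, fun a b ha hb => ?_⟩
  · change List.IsChain _ _
    rw [List.isChain_map, List.isChain_range_succ]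
    exact fun k hk => (hstep k (by omega)).edgeSig hτ
  · rw [List.range_succ_eq_map] at ha
    rw [List.getLast?_map, List.range_succ, List.getLast?_concat] at hb
    simp only [List.map_cons, List.head?_cons, Option.some.injEq, Option.map_some] at ha hb
    subst ha hb
    simpa [hclosed] using (hstep m (by omega)).edgeSig hτ

theorem top_mem_playValues_of_closedWalk (hτ : Strategy1 A τ) (hreas : Reasonable A σ)
    (hm : 0 < m) (hstep : ∀ k < m, PlayEdge A σ τ (g k) (g (k + 1))) (hclosed : g m = g 0) :
    Prof.top ∈ playValues A σ τ (g 0) := by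
  set π : ℕ → Option V := fun n => some (g (n % m))
  have hπ : IsPlay A σ τ (g 0) π := by
    refine ⟨by simp [π], fun n => ?_⟩
    change PlayEdge A σ τ (g (n % m)) (g ((n + 1) % m))
    rcases Nat.add_one_mod_eq_or hm n with h | ⟨hwrap, h⟩
    · rw [h]
      exact hstep _ (Nat.mod_lt n hm)
    · have hlast := hstep _ (Nat.mod_lt n hm)
      rwa [hwrap, hclosed, ← h] at hlast
  obtain ⟨t, ht, hmax⟩ := (Finset.range m).exists_max_image (A.color ∘ g)
    (Finset.nonempty_range_iff.mpr hm.ne')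
  simp only [Finset.mem_range, Function.comp_apply] at ht hmax
  have heven : Even (A.color (g t) : ℕ) :=
    hreas _ (cycleIn_of_closedWalk hτ hm hstep hclosed) _
      (List.mem_map.mpr ⟨t, List.mem_range.mpr ht, rfl⟩) (by simpa using hmax)
  have hwin : Won0B A π := by
    refine ⟨A.color (g t), heven, fun N => ⟨t + m * N, ?_, g t, ?_, rfl⟩,
      fun j hj => ⟨0, fun n _ ⟨w, hw, hwj⟩ => ?_⟩⟩
    · nlinarith
    · simp [π, Nat.add_mul_mod_self_left, Nat.mod_eq_of_lt ht]
    · obtain rfl := Option.some_injective _ hw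
      exact (hmax _ (Nat.mod_lt n hm)).not_gt (hwj ▸ hj)
  refine ⟨π, hπ, ?_⟩
  rw [PlayValue, dif_neg (by simp [π]), if_pos hwin]

end ClosedWalks

section Finiteness

variable [Fintype V] {A : PGA V d} {σ : V → Option V → Prop}
  {τ : V → V → Prop} {s u v : V} {π : ℕ → Option V}

theorem IsPlay.exists_eq_none_le_card (hτ : Strategy1 A τ) (hreas : Reasonable A σ)
    (htop : Prof.top ∉ playValues A σ τ v) (hvu : Relation.ReflTransGen (PlayEdge A σ τ) v u)
    (hπ : IsPlay A σ τ u π) : ∃ n ≤ Fintype.card V, π n = none := by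
  by_contra! hlong
  obtain ⟨g, hg⟩ := hπ.exists_vertices (hlong _ le_rfl)
  have hedge : ∀ k < Fintype.card V, PlayEdge A σ τ (g k) (g (k + 1)) := fun k hk => by
    have hstep := hπ.2 k
    rwa [hg k hk.le, hg (k + 1) hk] at hstep
  obtain ⟨a, b, hab, hgab⟩ := Fintype.exists_ne_map_eq_of_card_lt
    (fun k : Fin (Fintype.card V + 1) => g k) (by simp)
  wlog hlt : a < b generalizing a b
  · exact this b a hab.symm hgab.symm (lt_of_le_of_ne (not_lt.mp hlt) hab.symm)
  have hloop : Prof.top ∈ playValues A σ τ (g a) :=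
    top_mem_playValues_of_closedWalk (g := fun k => g (a + k)) (m := b - a) hτ hreas
      (by omega) (fun k hk => hedge (a + k) (by omega))
      (by simpa [Nat.add_sub_cancel' hlt.le] using hgab.symm)
  have hua : Relation.ReflTransGen (PlayEdge A σ τ) u (g a) := hπ.reflTransGen (hg a (by omega))
  exact htop (top_mem_playValues_of_reflTransGen (hvu.trans hua) hloop)

theorem exists_isMaxOf_playValues (hσ : Strategy0 A σ) (hτ : Strategy1 A τ)
    (hshort : ∀ π, IsPlay A σ τ s π → ∃ n ≤ Fintype.card V, π n = none) :
    ∃ m, IsMaxOf (playValues A σ τ s) (.fin m) := by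
  set S : Set (Fin d → ℤ) :=
    Set.range fun c : Fin d → Fin (Fintype.card V + 1) => fun k => ((c k : ℕ) : ℤ)
  have hvalues : ∀ q ∈ playValues A σ τ s, ∃ p ∈ S, q = .fin p := by
    rintro _ ⟨π, hπ, rfl⟩
    obtain ⟨n, hn, hnone⟩ := hshort π hπ
    have hend : ∃ n, π n = none := ⟨n, hnone⟩
    have hcount : ∀ k, ((Finset.range (Nat.find hend)).filter (ColorAt A π · k)).card <
        Fintype.card V + 1 := fun k =>
      calc _ ≤ Nat.find hend := (Finset.card_filter_le _ _).trans (Finset.card_range _).le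
        _ < _ := Nat.lt_succ_of_le ((Nat.find_le hnone).trans hn)
    exact ⟨_, ⟨fun k => ⟨_, hcount k⟩, rfl⟩, by rw [PlayValue, dif_pos hend]⟩
  set P : Set (Fin d → ℤ) := {p | Prof.fin p ∈ playValues A σ τ s}
  have hPS : P ⊆ S := fun p hp => by
    obtain ⟨p', hp', hpp'⟩ := hvalues _ hp
    exact Prof.fin.inj hpp' ▸ hp'
  have hP : P.Nonempty := by
    obtain ⟨π, hπ⟩ := exists_isPlay hσ hτ s
    obtain ⟨p, -, hp⟩ := hvalues _ ⟨π, hπ, rfl⟩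
    exact ⟨p, π, hπ, hp.symm⟩
  obtain ⟨m, hm, hmax⟩ := Set.exists_max_image P signedLex ((Set.finite_range _).subset hPS) hP
  refine ⟨m, hm, fun q hq => ?_⟩
  obtain ⟨p, -, rfl⟩ := hvalues q hq
  exact Prof.fin_le_fin.mpr (finLe_iff_signedLex_le.mpr (hmax p hq))

end Finiteness

theorem Strategy1.redirect {A : PGA V d} {τ : V → V → Prop}
    (hτ : Strategy1 A τ) {u v : V} (hown : A.owner u = 1) (he : A.edge u v) :
    Strategy1 A fun s t => if s = u then t = v else τ s t := by
  refine ⟨fun s t hst => ?_, fun s hs => ?_⟩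
  · simp only at hst
    split_ifs at hst with hs
    · subst hs hst
      exact ⟨hown, he⟩
    · exact hτ.1 s t hst
  · by_cases hsu : s = u
    · exact ⟨v, by simp [hsu]⟩
    · obtain ⟨t, ht⟩ := hτ.2 s hs
      exact ⟨t, by simp [hsu, ht]⟩

theorem zero_finLt_listProf_dropLast_add {A : PGA V d}
    {σ : V → Option V → Prop} {τ : V → V → Prop} (hτ : Strategy1 A τ) (hreas : Reasonable A σ)
    {u v : V} (hown : A.owner u = 1) (he : A.edge u v) {l : List V}
    (hl : List.IsChain (PlayEdge A σ τ) (v :: l))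
    (hlast : (v :: l).getLast (List.cons_ne_nil v l) = u) :
    FinLt 0 (listProf A (v :: l).dropLast + unitProf A u) := by
  have hL : CycleIn A σ (v :: l) := by
    refine ⟨List.cons_ne_nil v l, hl.imp fun _ _ h => h.edgeSig hτ, fun a b ha hb => ?_⟩
    rw [List.getLast?_eq_some_getLast (List.cons_ne_nil v l), hlast] at hb
    simp only [List.head?_cons, Option.some.injEq] at ha hb
    subst ha hb
    exact Or.inl ⟨hown, he⟩
  have hpos := zero_finLt_listProf_of_cycleIn hreas hL
  rwa [← List.dropLast_append_getLast (List.cons_ne_nil v l), listProf_append, hlast,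
    listProf_cons, listProf_nil, add_zero] at hpos

namespace IsValuation

variable {A : PGA V d} {σ : V → Option V → Prop} {Vσ : Option V → Prof d}
  {τ : V → V → Prop} {u v : V}

theorem le_add_of_not_reflTransGen (hV : IsValuation A σ Vσ) (hown : A.owner u = 1)
    (he : A.edge u v) (hτ : Strategy1 A τ) {q : Prof d} (hmax : IsMaxOf (playValues A σ τ v) q)
    (hvu : ¬ Relation.ReflTransGen (PlayEdge A σ τ) v u) :
    Prof.Le (Vσ (some u)) (q.add (unitProf A u)) := by
  set τ' : V → V → Prop := fun s t => if s = u then t = v else τ s t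
  have hagree : ∀ x, Relation.ReflTransGen (PlayEdge A σ τ) v x → ∀ z, τ' x z ↔ τ x z :=
    fun x hx z => by simp only [τ', if_neg (show x ≠ u from fun hxu => hvu (hxu ▸ hx))]
  have hforced : ∀ y, PlayStep A σ τ' (some u) y ↔ y = some v := by
    simp [PlayStep, hown, τ']
  rw [← playValues_eq_of_agree hagree] at hmax
  exact (hV.2 u).2 _ ⟨τ', hτ.redirect hown he, isMaxOf_playValues_of_forced hforced hmax⟩

theorem finLe_add_of_reflTransGen [Fintype V] (hσ : Strategy0 A σ) (hreas : Reasonable A σ)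
    (hV : IsValuation A σ Vσ) (hown : A.owner u = 1) (he : A.edge u v) (hτ : Strategy1 A τ)
    {pu pv : Fin d → ℤ} (hu : Vσ (some u) = .fin pu)
    (hmax : IsMaxOf (playValues A σ τ v) (.fin pv))
    (hvu : Relation.ReflTransGen (PlayEdge A σ τ) v u) :
    FinLe pu (pv + unitProf A u) := by
  have htop : Prof.top ∉ playValues A σ τ v := fun h => Prof.not_top_le_fin pv (hmax.2 _ h)
  obtain ⟨m, hm⟩ := exists_isMaxOf_playValues hσ hτ fun π hπ =>
    hπ.exists_eq_none_le_card hτ hreas htop hvu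
  have hpu : FinLe pu m := Prof.fin_le_fin.mp (hu ▸ (hV.2 u).2 _ ⟨τ, hτ, hm⟩)
  obtain ⟨l, hl, hlast⟩ := List.exists_isChain_cons_of_relationReflTransGen hvu
  set path := (v :: l).dropLast
  obtain ⟨πm, hπm, hπmval⟩ := hm.1
  obtain ⟨π, hπ, hval⟩ := exists_isPlay_of_isChain l hl (hlast ▸ hπm)
  have hpath : FinLe (m + listProf A path) pv := by
    refine Prof.fin_le_fin.mp (hmax.2 _ ⟨π, hπ, ?_⟩)
    rw [hval, ← hπmval]
    rfl
  have hcycle : FinLt 0 (listProf A path + unitProf A u) :=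
    zero_finLt_listProf_dropLast_add hτ hreas hown he hl hlast
  rw [finLe_iff_signedLex_le] at hpu hpath ⊢
  rw [finLt_iff_signedLex_lt, map_zero] at hcycle
  rw [map_add] at hpath hcycle ⊢
  calc signedLex pu ≤ signedLex m := hpu
    _ ≤ signedLex m + (signedLex (listProf A path) + signedLex (unitProf A u)) :=
      le_add_of_nonneg_right hcycle.le
    _ ≤ signedLex pv + signedLex (unitProf A u) := by
      rw [← add_assoc]
      exact add_le_add hpath le_rfl

theorem finLe_add_of_owner_eq_one [Fintype V] (hσ : Strategy0 A σ) (hreas : Reasonable A σ)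
    (hV : IsValuation A σ Vσ) (hown : A.owner u = 1) (he : A.edge u v) {pu pv : Fin d → ℤ}
    (hu : Vσ (some u) = .fin pu) (hv : Vσ (some v) = .fin pv) :
    FinLe pu (pv + unitProf A u) := by
  obtain ⟨τ, hτ, hmax⟩ := (hV.2 v).1
  rw [hv] at hmax
  by_cases hvu : Relation.ReflTransGen (PlayEdge A σ τ) v u
  · exact hV.finLe_add_of_reflTransGen hσ hreas hown he hτ hu hmax hvu
  · exact Prof.fin_le_fin.mp (hu ▸ hV.le_add_of_not_reflTransGen hown he hτ hmax hvu)

end IsValuation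

theorem Fin.sum_succ_sub_castSucc {α : Type*} [AddCommGroup α] {n : ℕ} (f : Fin (n + 2) → α) :
    ∑ i : Fin (n + 1), (f i.succ - f i.castSucc) = f (Fin.last (n + 1)) - f 0 := by
  rw [Finset.sum_sub_distrib, sub_eq_sub_iff_add_eq_add, add_comm, ← Fin.sum_univ_succ,
    Fin.sum_univ_castSucc, add_comm]

/-- **Proposition 1, edge weights.** For a reasonable strategy `σ`, the
Dijkstra edge weights `w(u,v) = (℘(u) + 𝒱_σ(v)) − 𝒱_σ(u)` are non-negative on every
edge of `A_⊥|I_σ` (where `𝒱_σ` is finite), and along any path `t_0 … t_n ⊥` of this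
restricted graph, `℘(t_0 … t_n) − 𝒱_σ(t_0)` equals the sum of the edge weights. -/
theorem dijkstra_weights_nonneg {V : Type} {d : ℕ} [Fintype V] (A : PGA V d)
    (σ : V → Option V → Prop) (Vσ : Option V → Prof d)
    (hσ : Strategy0 A σ) (hreas : Reasonable A σ) (hV : IsValuation A σ Vσ) :
    (∀ (u : V) (t : Option V) (pu pt : Fin d → ℤ),
      EdgeRestrI A Vσ (some u) t → Vσ (some u) = .fin pu → Vσ t = .fin pt →
        FinLe 0 (unitProf A u + pt - pu)) ∧
    (∀ (n : ℕ) (t : Fin (n + 1) → V) (f : Fin (n + 2) → (Fin d → ℤ)),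
      (∀ i : Fin n, EdgeRestrI A Vσ (some (t i.castSucc)) (some (t i.succ))) →
      Improvement A Vσ (t (Fin.last n)) none →
      (∀ i : Fin (n + 1), Vσ (some (t i)) = .fin (f i.castSucc)) →
      f (Fin.last (n + 1)) = 0 →
      (∑ i : Fin (n + 1), unitProf A (t i)) - f 0 =
        ∑ i : Fin (n + 1), (unitProf A (t i) + f i.succ - f i.castSucc)) := by
  refine ⟨fun u t pu pt hut hu ht => ?_, fun n t f _ _ _ hlast => ?_⟩
  · rw [add_comm, ← finLe_iff_zero_finLe_sub]
    rcases hut with ⟨hown, v, rfl, he⟩ | ⟨-, -, hle⟩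
    · exact hV.finLe_add_of_owner_eq_one hσ hreas hown he hu ht
    · rw [hu, ht] at hle
      exact Prof.fin_le_fin.mp hle
  · simp_rw [add_sub_assoc, Finset.sum_add_distrib]
    rw [Fin.sum_succ_sub_castSucc, hlast, zero_sub, sub_eq_add_neg]
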